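/- Energy conservation of the implicit midpoint split step: if complex numbers u'_n, u'_{n+1} satisfy u'_n = u_n + B_n^+[(u+u')/2]·Δτ and u'_{n+1} = u_{n+1} + B_{n+1}^-[(u+u')/2]·Δτ, with all other components u'_m = u_m, then |u'_n|² + |u'_{n+1}|² = |u_n|² + |u_{n+1}|², i.e. Σ_m |u'_m|² = Σ_m |u_m|². -/

import Mathlib

open Complex

/-- Lower part of the Sabra nonlinearity, with `k n = 2^n`. -/
noncomputable def sabraBminus (u : ℤ → ℂ) (n : ℤ) : ℂ :=
  Complex.I * (-(2:ℂ)^n * u (n+1) * (starRingEnd ℂ) (u (n-1))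
    + (1/2) * (2:ℂ)^(n-1) * u (n-1) * u (n-2))

/-- Upper part of the Sabra nonlinearity, with `k n = 2^n`. -/
noncomputable def sabraBplus (u : ℤ → ℂ) (n : ℤ) : ℂ :=
  Complex.I * ((2:ℂ)^(n+1) * u (n+2) * (starRingEnd ℂ) (u (n+1))
    + (1/2) * (2:ℂ)^n * u (n+1) * (starRingEnd ℂ) (u (n-1)))

/-- Energy conservation of the implicit midpoint split step of the
discrete-time Sabra model. -/
theorem implicit_step_energy_conservation (u u' : ℤ → ℂ) (n : ℤ) (Δτ : ℝ)
    (hu : (Function.support u).Finite)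
    (hn : u' n = u n + sabraBplus (fun m => (u m + u' m) / 2) n * (Δτ:ℂ))
    (hn1 : u' (n+1) = u (n+1) + sabraBminus (fun m => (u m + u' m) / 2) (n+1) * (Δτ:ℂ))
    (hrest : ∀ m : ℤ, m ≠ n → m ≠ n + 1 → u' m = u m) :
    ‖u' n‖ ^ 2 + ‖u' (n+1)‖ ^ 2
        = ‖u n‖ ^ 2 + ‖u (n+1)‖ ^ 2
      ∧ ∑ᶠ m : ℤ, ‖u' m‖ ^ 2 = ∑ᶠ m : ℤ, ‖u m‖ ^ 2 := by
  classical
  set v : ℤ → ℂ := fun m => (u m + u' m) / 2 with hv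
  -- real-part identity
  have hid : ∀ z z' : ℂ, Complex.normSq z' - Complex.normSq z
      = ((z' - z) * ((starRingEnd ℂ) z' + (starRingEnd ℂ) z)).re := by
    intro z z'
    simp [Complex.normSq_apply, Complex.mul_re, Complex.sub_re, Complex.sub_im,
      Complex.add_re, Complex.add_im]
    ring
  have hc : ∀ m, (starRingEnd ℂ) (u' m) + (starRingEnd ℂ) (u m)
      = 2 * (starRingEnd ℂ) (v m) := by
    intro m
    have h2 : u' m + u m = 2 * v m := by
      simp only [hv]
      ring
    rw [← map_add, h2, map_mul, Complex.conj_ofNat]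
  have e1 : n + 1 + 1 = n + 2 := by ring
  have e2 : n + 1 - 1 = n := by ring
  have e3 : n + 1 - 2 = n - 1 := by ring
  have hpow : (2:ℂ)^(n+1) = (2:ℂ)^n * 2 := by
    rw [zpow_add_one₀ (two_ne_zero)]
  -- the total flux term
  have hT : (u' n - u n) * ((starRingEnd ℂ) (u' n) + (starRingEnd ℂ) (u n))
      + (u' (n+1) - u (n+1)) * ((starRingEnd ℂ) (u' (n+1)) + (starRingEnd ℂ) (u (n+1)))
      = Complex.I * ((Δτ:ℂ) * (2:ℂ)^n *
          ((starRingEnd ℂ) (v n) * v (n+1) * (starRingEnd ℂ) (v (n-1))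
            + v n * (starRingEnd ℂ) (v (n+1)) * v (n-1))) := by
    have hXa : u' n - u n = sabraBplus v n * (Δτ:ℂ) := by rw [hn]; ring
    have hXb : u' (n+1) - u (n+1) = sabraBminus v (n+1) * (Δτ:ℂ) := by rw [hn1]; ring
    rw [hXa, hXb, hc, hc]
    simp only [sabraBplus, sabraBminus, e1, e2, e3, hpow]
    ring
  have hw' : v n * (starRingEnd ℂ) (v (n+1)) * v (n-1)
      = (starRingEnd ℂ) ((starRingEnd ℂ) (v n) * v (n+1) * (starRingEnd ℂ) (v (n-1))) := by
    simp only [map_mul, Complex.conj_conj]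
  have part1 : ‖u' n‖ ^ 2 + ‖u' (n+1)‖ ^ 2
      = ‖u n‖ ^ 2 + ‖u (n+1)‖ ^ 2 := by
    have h1 := hid (u n) (u' n)
    have h2 := hid (u (n+1)) (u' (n+1))
    have hre : ((u' n - u n) * ((starRingEnd ℂ) (u' n) + (starRingEnd ℂ) (u n))
        + (u' (n+1) - u (n+1)) * ((starRingEnd ℂ) (u' (n+1)) + (starRingEnd ℂ) (u (n+1)))).re
        = 0 := by
      have h2n : (2:ℂ)^n = (((2:ℝ)^n : ℝ) : ℂ) := by
        push_cast
        ring
      rw [hT, hw', Complex.add_conj, h2n, ← Complex.ofReal_mul, ← Complex.ofReal_mul]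
      simp only [Complex.mul_re, Complex.I_re, Complex.I_im, Complex.ofReal_re,
        Complex.ofReal_im]
      ring
    rw [Complex.sq_norm, Complex.sq_norm, Complex.sq_norm, Complex.sq_norm]
    linarith [h1, h2, hre, Complex.add_re
      ((u' n - u n) * ((starRingEnd ℂ) (u' n) + (starRingEnd ℂ) (u n)))
      ((u' (n+1) - u (n+1)) * ((starRingEnd ℂ) (u' (n+1)) + (starRingEnd ℂ) (u (n+1))))]
  refine ⟨part1, ?_⟩
  set S : Finset ℤ := hu.toFinset ∪ {n, n+1} with hS
  have hnS : n ∈ S := by simp [hS]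
  have hn1S : n + 1 ∈ S := by simp [hS]
  have hsub : (Function.support fun m => ‖u m‖ ^ 2) ⊆ ↑S := by
    intro m hm
    have : u m ≠ 0 := by
      intro h
      simp [Function.mem_support, h] at hm
    simp [hS, Set.Finite.mem_toFinset, Function.mem_support, this]
  have hsub' : (Function.support fun m => ‖u' m‖ ^ 2) ⊆ ↑S := by
    intro m hm
    by_cases h1 : m = n
    · simp [hS, h1]
    by_cases h2 : m = n + 1
    · simp [hS, h2]
    have hm' : u' m ≠ 0 := by
      intro h
      simp [Function.mem_support, h] at hm
    rw [hrest m h1 h2] at hm'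
    simp [hS, Set.Finite.mem_toFinset, Function.mem_support, hm']
  rw [finsum_eq_finset_sum_of_support_subset _ hsub', finsum_eq_finset_sum_of_support_subset _ hsub]
  have hmem : n ∈ S.erase (n+1) := Finset.mem_erase.mpr ⟨by omega, hnS⟩
  rw [← Finset.sum_erase_add S _ hn1S, ← Finset.sum_erase_add (S.erase (n+1)) _ hmem,
    ← Finset.sum_erase_add S (fun m => ‖u m‖ ^ 2) hn1S,
    ← Finset.sum_erase_add (S.erase (n+1)) (fun m => ‖u m‖ ^ 2) hmem]
  have hsum : ∑ m ∈ ((S.erase (n+1)).erase n), ‖u' m‖ ^ 2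
      = ∑ m ∈ ((S.erase (n+1)).erase n), ‖u m‖ ^ 2 := by
    refine Finset.sum_congr rfl fun m hm => ?_
    obtain ⟨h1, hm2⟩ := Finset.mem_erase.mp hm
    obtain ⟨h2, _⟩ := Finset.mem_erase.mp hm2
    rw [hrest m h1 h2]
  rw [hsum]
  linarith [part1]
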